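/- Fix σ > 0, a > 0, and define u(a,h) := σ√(2 log(1/h)) + 1 - (σ/2)·(log log(1/h))/√(2 log(1/h)) - σ·(log(2a√π))/√(2 log(1/h)) for h ∈ (0,1). If v: (0,∞) → ℝ satisfies v(h)·√(log(1/h)) → 0 as h → 0⁺, then P(u(a,h) + v(h) + σN ∈ [-1,1]) / (a·h) → 1 as h → 0⁺, where N is a standard Gaussian. -/

import Mathlib

open MeasureTheory ProbabilityTheory Real Filter Set

/-- The height `u(a,h)` of the boundary conditions, chosen so that the contact
probability is asymptotically `a·h`. -/
noncomputable def uHeight (σ a h : ℝ) : ℝ :=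
  σ * Real.sqrt (2 * Real.log (1 / h)) + 1
    - (σ / 2) * Real.log (Real.log (1 / h)) / Real.sqrt (2 * Real.log (1 / h))
    - σ * Real.log (2 * a * Real.sqrt Real.pi) / Real.sqrt (2 * Real.log (1 / h))

/-!
Put `t = (u + v - 1) / σ`. After `N ↦ -N` the event is `N ∈ [t, t + 2/σ]`, and for a window of
fixed width `δ` the Gaussian mass is `φ(t)/t · (1 + o(1))` as `t → ∞`, where `φ` is the standard
normal density: on `[t, t + δ]` the density is `φ(t) e^{-t(x-t)}` up to a factor between
`e^{-δ(x-t)/2}` and `1`.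
Writing `t = s + w` with `s = √(2 log(1/h))`, the correction `w` tends to `0`, and the height `u`
is tuned so that `φ(s + w) = a h s e^{-(s v/σ + w²/2)}`; as `s v → 0` and `s/t → 1`, `φ(t)/t ~ a h`.
-/

open Asymptotics Topology

lemma gaussianPDFReal_zero_one_add (x y : ℝ) :
    gaussianPDFReal 0 1 (x + y) = gaussianPDFReal 0 1 x * exp (-(x * y + y ^ 2 / 2)) := by
  simp only [gaussianPDFReal, sub_zero, NNReal.coe_one, mul_one, mul_assoc, ← exp_add]
  ring_nf

lemma integral_exp_neg_mul {c : ℝ} (hc : c ≠ 0) (δ : ℝ) :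
    ∫ y in (0 : ℝ)..δ, exp (-(c * y)) = (1 - exp (-(c * δ))) / c := by
  rw [intervalIntegral.integral_comp_mul_left (fun x => exp (-x)) hc,
    intervalIntegral.integral_comp_neg, integral_exp]
  simp [div_eq_inv_mul]

lemma integral_gaussianPDFReal_window (t δ : ℝ) :
    ∫ x in t..t + δ, gaussianPDFReal 0 1 x
      = gaussianPDFReal 0 1 t * ∫ y in (0 : ℝ)..δ, exp (-(t * y + y ^ 2 / 2)) := by
  rw [← intervalIntegral.integral_const_mul]
  simp_rw [← gaussianPDFReal_zero_one_add]
  simp [intervalIntegral.integral_comp_add_left (gaussianPDFReal 0 1) t]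

lemma integral_exp_window_bounds {t δ : ℝ} (ht : 0 < t) (hδ : 0 ≤ δ) :
    (1 - exp (-((t + δ / 2) * δ))) / (t + δ / 2)
        ≤ ∫ y in (0 : ℝ)..δ, exp (-(t * y + y ^ 2 / 2)) ∧
      ∫ y in (0 : ℝ)..δ, exp (-(t * y + y ^ 2 / 2)) ≤ (1 - exp (-(t * δ))) / t := by
  have hintegrable :
      ∀ f : ℝ → ℝ, Continuous f → IntervalIntegrable (fun y => exp (f y)) volume 0 δ :=
    fun f hf => (continuous_exp.comp hf).intervalIntegrable _ _
  rw [← integral_exp_neg_mul (by positivity), ← integral_exp_neg_mul ht.ne']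
  constructor
  · refine intervalIntegral.integral_mono_on hδ (hintegrable _ (by fun_prop))
      (hintegrable _ (by fun_prop)) ?_
    rintro y ⟨hy0, hyδ⟩
    gcongr
    nlinarith
  · refine intervalIntegral.integral_mono_on hδ (hintegrable _ (by fun_prop))
      (hintegrable _ (by fun_prop)) ?_
    rintro y -
    gcongr
    nlinarith [sq_nonneg y]

lemma tendsto_one_sub_exp_neg_add_mul_atTop {δ : ℝ} (hδ : 0 < δ) (c : ℝ) :
    Tendsto (fun t => 1 - exp (-((t + c) * δ))) atTop (𝓝 1) := by
  have := tendsto_exp_atBot.comp (tendsto_neg_atTop_atBot.comp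
    ((tendsto_atTop_add_const_right _ c tendsto_id).atTop_mul_const hδ))
  simpa using tendsto_const_nhds.sub this

lemma tendsto_div_add_const_atTop (c : ℝ) : Tendsto (fun t => t / (t + c)) atTop (𝓝 1) := by
  have := (tendsto_const_nhds (x := (1 : ℝ))).sub
    ((tendsto_const_nhds (x := c)).div_atTop (tendsto_atTop_add_const_right _ c tendsto_id))
  rw [sub_zero] at this
  refine this.congr' ?_
  filter_upwards [eventually_gt_atTop (-c)] with t ht
  have : t + c ≠ 0 := by linarith
  simp only [id]
  field_simp
  ring

lemma tendsto_mul_integral_exp_window {δ : ℝ} (hδ : 0 < δ) :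
    Tendsto (fun t => t * ∫ y in (0 : ℝ)..δ, exp (-(t * y + y ^ 2 / 2))) atTop (𝓝 1) := by
  have hlower := (tendsto_div_add_const_atTop (δ / 2)).mul
    (tendsto_one_sub_exp_neg_add_mul_atTop hδ (δ / 2))
  have hupper := tendsto_one_sub_exp_neg_add_mul_atTop hδ 0
  rw [mul_one] at hlower
  refine tendsto_of_tendsto_of_tendsto_of_le_of_le' hlower hupper ?_ ?_ <;>
    filter_upwards [eventually_gt_atTop 0] with t ht <;>
    obtain ⟨hlo, hhi⟩ := integral_exp_window_bounds ht hδ.le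
  · calc t / (t + δ / 2) * (1 - exp (-((t + δ / 2) * δ)))
        = t * ((1 - exp (-((t + δ / 2) * δ))) / (t + δ / 2)) := by ring
      _ ≤ _ := by gcongr
  · calc t * ∫ y in (0 : ℝ)..δ, exp (-(t * y + y ^ 2 / 2))
        ≤ t * ((1 - exp (-(t * δ))) / t) := by gcongr
      _ = 1 - exp (-((t + 0) * δ)) := by field_simp; ring_nf

theorem isEquivalent_gaussianReal_Icc {δ : ℝ} (hδ : 0 < δ) :
    (fun t => (gaussianReal 0 1 (Icc t (t + δ))).toReal) ~[atTop]
      fun t => gaussianPDFReal 0 1 t / t := by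
  refine isEquivalent_iff_exists_eq_mul.2 ⟨_, tendsto_mul_integral_exp_window hδ, ?_⟩
  filter_upwards [eventually_gt_atTop 0] with t ht
  rw [gaussianReal_apply_eq_integral 0 one_ne_zero, ENNReal.toReal_ofReal
      (setIntegral_nonneg measurableSet_Icc fun x _ => gaussianPDFReal_nonneg 0 1 x),
    integral_Icc_eq_integral_Ioc, ← intervalIntegral.integral_of_le (by linarith),
    integral_gaussianPDFReal_window, Pi.mul_apply]
  field_simp

lemma gaussianReal_setOf_add_mul_mem_Icc {σ : ℝ} (hσ : 0 < σ) (c : ℝ) :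
    gaussianReal 0 1 {x | c + σ * x ∈ Icc (-1) 1}
      = gaussianReal 0 1 (Icc ((c - 1) / σ) ((c - 1) / σ + 2 / σ)) := by
  have hset : {x | c + σ * x ∈ Icc (-1) 1}
      = (fun x => -x) ⁻¹' Icc ((c - 1) / σ) ((c - 1) / σ + 2 / σ) := by
    ext x
    rw [show (c - 1) / σ + 2 / σ = (c + 1) / σ by ring]
    simp only [mem_ofPred_eq, mem_preimage, mem_Icc, div_le_iff₀ hσ, le_div_iff₀ hσ]
    constructor <;> rintro ⟨h1, h2⟩ <;> constructor <;> linarith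
  rw [hset, ← Measure.map_apply measurable_neg measurableSet_Icc, gaussianReal_map_neg, neg_zero]

lemma tendsto_log_one_div_nhdsGT_zero : Tendsto (fun h : ℝ => log (1 / h)) (𝓝[>] 0) atTop :=
  (tendsto_log_atTop.comp tendsto_inv_nhdsGT_zero).congr fun h => by simp [one_div]

lemma tendsto_sqrt_two_mul_log_one_div_nhdsGT_zero :
    Tendsto (fun h : ℝ => √(2 * log (1 / h))) (𝓝[>] 0) atTop :=
  tendsto_sqrt_atTop.comp (tendsto_log_one_div_nhdsGT_zero.const_mul_atTop two_pos)

lemma tendsto_log_div_sqrt_two_mul_atTop : Tendsto (fun L => log L / √(2 * L)) atTop (𝓝 0) := by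
  have := ((isLittleO_log_rpow_atTop one_half_pos).tendsto_div_nhds_zero).div_const √2
  rw [zero_div] at this
  refine this.congr' ?_
  filter_upwards [eventually_ge_atTop 0] with L hL
  rw [sqrt_mul zero_le_two, sqrt_eq_rpow L, div_div, mul_comm]

lemma gaussianPDFReal_sqrt_two_mul_log_one_div_add {h : ℝ} (h0 : 0 < h) (h1 : h ≤ 1) (w : ℝ) :
    gaussianPDFReal 0 1 (√(2 * log (1 / h)) + w)
      = h / √(2 * π) * exp (-(√(2 * log (1 / h)) * w + w ^ 2 / 2)) := by
  have hL : 0 ≤ log (1 / h) := log_nonneg (by rw [le_div_iff₀ h0]; linarith)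
  have hexp : exp (-log (1 / h)) = h := by rw [one_div, log_inv, neg_neg, exp_log h0]
  rw [gaussianPDFReal_zero_one_add, gaussianPDFReal, NNReal.coe_one, mul_one, sub_zero,
    sq_sqrt (by positivity), show -(2 * log (1 / h)) / (2 * 1) = -log (1 / h) by ring, hexp]
  ring

section uHeight

variable {σ a : ℝ}

lemma uHeight_add_sub_one_div (hσ : σ ≠ 0) (h y : ℝ) :
    (uHeight σ a h + y - 1) / σ = √(2 * log (1 / h))
      + (y / σ - (log (log (1 / h)) / 2 + log (2 * a * √π)) / √(2 * log (1 / h))) := by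
  rw [uHeight]
  field_simp
  ring

lemma gaussianPDFReal_uHeight (hσ : σ ≠ 0) (ha : 0 < a) {h : ℝ} (h0 : 0 < h) (h1 : h < 1)
    (y : ℝ) :
    gaussianPDFReal 0 1 ((uHeight σ a h + y - 1) / σ)
      = a * h * √(2 * log (1 / h)) * exp (-(√(2 * log (1 / h)) * y / σ
          + ((uHeight σ a h + y - 1) / σ - √(2 * log (1 / h))) ^ 2 / 2)) := by
  have hL : 0 < log (1 / h) := log_pos (by rw [lt_div_iff₀ h0]; linarith)
  rw [uHeight_add_sub_one_div hσ, add_sub_cancel_left,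
    gaussianPDFReal_sqrt_two_mul_log_one_div_add h0 h1.le]
  generalize log (1 / h) = L at hL ⊢
  have hs0 : √(2 * L) ≠ 0 := by positivity
  have hsw : √(2 * L) * (y / σ - (log L / 2 + log (2 * a * √π)) / √(2 * L))
      = √(2 * L) * y / σ - (log L / 2 + log (2 * a * √π)) := by
    field_simp
  rw [hsw]
  generalize y / σ - (log L / 2 + log (2 * a * √π)) / √(2 * L) = w
  rw [show -(√(2 * L) * y / σ - (log L / 2 + log (2 * a * √π)) + w ^ 2 / 2)
      = log L / 2 + log (2 * a * √π) + -(√(2 * L) * y / σ + w ^ 2 / 2) by ring,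
    exp_add, exp_add, ← log_sqrt hL.le, exp_log (sqrt_pos.2 hL), exp_log (by positivity),
    sqrt_mul zero_le_two, sqrt_mul zero_le_two]
  field_simp
  norm_num

variable {v : ℝ → ℝ}

lemma tendsto_nhds_zero_of_tendsto_mul_sqrt_log_one_div
    (hv : Tendsto (fun h => v h * √(log (1 / h))) (𝓝[>] 0) (𝓝 0)) :
    Tendsto v (𝓝[>] 0) (𝓝 0) := by
  have hsqrt := tendsto_sqrt_atTop.comp tendsto_log_one_div_nhdsGT_zero
  refine (mul_zero (0 : ℝ) ▸ hv.mul hsqrt.inv_tendsto_atTop).congr' ?_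
  filter_upwards [hsqrt.eventually_gt_atTop 0] with h hh
  exact mul_inv_cancel_right₀ hh.ne' (v h)

lemma tendsto_uHeight_sub_sqrt (hσ : σ ≠ 0) (hv : Tendsto v (𝓝[>] 0) (𝓝 0)) :
    Tendsto (fun h => (uHeight σ a h + v h - 1) / σ - √(2 * log (1 / h))) (𝓝[>] 0) (𝓝 0) := by
  simp_rw [uHeight_add_sub_one_div hσ, add_sub_cancel_left, add_div, div_right_comm _ (2 : ℝ)]
  have hlog := (tendsto_log_div_sqrt_two_mul_atTop.comp tendsto_log_one_div_nhdsGT_zero).div_const 2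
  have hconst := (tendsto_const_nhds (x := log (2 * a * √π))).div_atTop
    tendsto_sqrt_two_mul_log_one_div_nhdsGT_zero
  simpa only [Function.comp_def, zero_div, add_zero, sub_zero] using
    (hv.div_const σ).sub (hlog.add hconst)

lemma tendsto_uHeight_atTop (hσ : σ ≠ 0) (hv : Tendsto v (𝓝[>] 0) (𝓝 0)) :
    Tendsto (fun h => (uHeight σ a h + v h - 1) / σ) (𝓝[>] 0) atTop :=
  (tendsto_sqrt_two_mul_log_one_div_nhdsGT_zero.atTop_add (tendsto_uHeight_sub_sqrt hσ hv)).congr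
    fun _ => add_sub_cancel _ _

theorem isEquivalent_gaussianPDFReal_uHeight (hσ : σ ≠ 0) (ha : 0 < a)
    (hv : Tendsto (fun h => v h * √(log (1 / h))) (𝓝[>] 0) (𝓝 0)) :
    (fun h => gaussianPDFReal 0 1 ((uHeight σ a h + v h - 1) / σ) / ((uHeight σ a h + v h - 1) / σ))
      ~[𝓝[>] 0] fun h => a * h := by
  have hv0 := tendsto_nhds_zero_of_tendsto_mul_sqrt_log_one_div hv
  have hT := tendsto_uHeight_atTop (a := a) hσ hv0
  have hw := tendsto_uHeight_sub_sqrt (a := a) hσ hv0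
  have hsT : Tendsto (fun h => √(2 * log (1 / h)) / ((uHeight σ a h + v h - 1) / σ))
      (𝓝[>] 0) (𝓝 1) := by
    refine (sub_zero (1 : ℝ) ▸ tendsto_const_nhds.sub (hw.div_atTop hT)).congr' ?_
    filter_upwards [hT.eventually_gt_atTop 0] with h hTh
    generalize (uHeight σ a h + v h - 1) / σ = T at hTh ⊢
    field_simp
    ring
  have hsv : Tendsto (fun h => √(2 * log (1 / h)) * v h / σ) (𝓝[>] 0) (𝓝 0) := by
    have := (hv.const_mul √2).div_const σ
    rw [mul_zero, zero_div] at this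
    refine this.congr fun h => ?_
    rw [sqrt_mul zero_le_two]
    ring
  have hexp := (hsv.add ((hw.pow 2).div_const 2)).neg
  rw [zero_pow two_ne_zero, zero_div, add_zero, neg_zero] at hexp
  replace hexp := (continuous_exp.tendsto 0).comp hexp
  rw [exp_zero] at hexp
  refine isEquivalent_iff_exists_eq_mul.2 ⟨_, mul_one (1 : ℝ) ▸ hsT.mul hexp, ?_⟩
  filter_upwards [Ioo_mem_nhdsGT one_pos, hT.eventually_gt_atTop 0] with h ⟨h0, h1⟩ hTh
  rw [gaussianPDFReal_uHeight hσ ha h0 h1]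
  simp only [Pi.mul_apply, Function.comp_apply]
  field_simp

end uHeight

theorem stmt_7 (σ a : ℝ) (hσ : 0 < σ) (ha : 0 < a) (v : ℝ → ℝ)
    (hv : Tendsto (fun h => v h * Real.sqrt (Real.log (1 / h)))
      (nhdsWithin 0 (Set.Ioi 0)) (nhds 0)) :
    Tendsto (fun h =>
      ((gaussianReal 0 1) {x : ℝ | uHeight σ a h + v h + σ * x ∈ Set.Icc (-1 : ℝ) 1}).toReal
        / (a * h))
      (nhdsWithin 0 (Set.Ioi 0)) (nhds 1) := by
  have hT := tendsto_uHeight_atTop (a := a) hσ.ne'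
    (tendsto_nhds_zero_of_tendsto_mul_sqrt_log_one_div hv)
  have hprob : (fun h => (gaussianReal 0 1 {x | uHeight σ a h + v h + σ * x ∈ Icc (-1) 1}).toReal)
      ~[𝓝[>] 0] fun h => gaussianPDFReal 0 1 ((uHeight σ a h + v h - 1) / σ)
        / ((uHeight σ a h + v h - 1) / σ) := by
    simp_rw [gaussianReal_setOf_add_mul_mem_Icc hσ]
    exact (isEquivalent_gaussianReal_Icc (by positivity)).comp_tendsto hT
  refine (isEquivalent_iff_tendsto_one ?_).1
    (hprob.trans (isEquivalent_gaussianPDFReal_uHeight hσ.ne' ha hv))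
  filter_upwards [self_mem_nhdsWithin] with h (h0 : 0 < h)
  positivity
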